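/- For the strongly-convex variant of AdaBB, the quantities M_k and P_k satisfy: M_k ≥ 0, P_k ≥ 0 and P_k = α_k·θ_k for all k ≥ 1; and 2M_{k+1} ≤ 1 and P_{k+1} ≤ α_k + η·P_k for all k ≥ 0. -/

import Mathlib

open scoped RealInnerProductSpace
open Finset Filter

noncomputable section

/-- The strongly-convex variant of the AdaBB iteration (stepsize rule (5.2) of the paper),
with parameters `η ∈ [0,1)` and `δ ∈ (1,2)`, for a convex differentiable function
`f : ℝⁿ → ℝ` with gradient `f'` that attains its minimum. -/
structure AdaBBSC (n : ℕ) where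
  η : ℝ
  δ : ℝ
  hη0 : 0 ≤ η
  hη1 : η < 1
  hδ1 : 1 < δ
  hδ2 : δ < 2
  f : EuclideanSpace ℝ (Fin n) → ℝ
  f' : EuclideanSpace ℝ (Fin n) → EuclideanSpace ℝ (Fin n)
  x : ℕ → EuclideanSpace ℝ (Fin n)
  α : ℕ → ℝ
  θ : ℕ → ℝ
  lam : ℕ → ℝ
  hconv : ConvexOn ℝ Set.univ f
  hgrad : ∀ y, HasGradientAt f (f' y) y
  hmin : ∃ z, ∀ y, f z ≤ f y
  hα0 : 0 < α 0
  hθ0 : 0 ≤ θ 0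
  hx1 : x 1 = x 0 - α 0 • f' (x 0)
  hne : ∀ k, f' (x (k + 1)) ≠ f' (x k)
  hlam : ∀ k, lam (k + 1) =
    ⟪f' (x (k + 1)) - f' (x k), x (k + 1) - x k⟫ / ‖f' (x (k + 1)) - f' (x k)‖ ^ 2
  hlampos : ∀ k, 0 < lam (k + 1)
  hcase1 : ∀ k, α k ≤ lam (k + 1) →
    α (k + 1) = min (Real.sqrt (1 + η * θ k) * α k) (lam (k + 1)) ∧
    θ (k + 1) = α (k + 1) / α k
  hcase2 : ∀ k, δ * α k / 2 < lam (k + 1) → lam (k + 1) < α k →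
    α (k + 1) = lam (k + 1) ∧ θ (k + 1) = 2 * α (k + 1) / α k - 1
  hcase3 : ∀ k, lam (k + 1) ≤ δ * α k / 2 →
    α (k + 1) = lam (k + 1) / Real.sqrt 2 ∧ θ (k + 1) = α (k + 1) / α k
  hstep : ∀ k, x (k + 2) = x (k + 1) - α (k + 1) • f' (x (k + 1))

namespace AdaBBSC

variable {n : ℕ}

/-- `M_k` (for `k ≥ 1`), as in (5.4). -/
def M (S : AdaBBSC n) (k : ℕ) : ℝ :=
  if S.α (k - 1) ≤ S.lam k then 0
  else if S.δ * S.α (k - 1) / 2 < S.lam k then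
    S.α k / S.α (k - 1) - S.α k ^ 2 / S.α (k - 1) ^ 2
  else 1 / 2 - S.lam k / (2 * S.α (k - 1))

/-- `P_k` for `k ≥ 1`, as in (5.4). -/
def Paux (S : AdaBBSC n) (k : ℕ) : ℝ :=
  if S.α (k - 1) ≤ S.lam k then S.α k ^ 2 / S.α (k - 1)
  else if S.δ * S.α (k - 1) / 2 < S.lam k then 2 * S.α k ^ 2 / S.α (k - 1) - S.α k
  else S.α k ^ 2 / S.α (k - 1)

/-- `P_k`, with the convention `P_0 = (P_1 - α_0)/η` if `η ∈ (0,1)` and `P_0 = 0` if `η = 0`. -/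
def P (S : AdaBBSC n) (k : ℕ) : ℝ :=
  if k = 0 then (if S.η = 0 then 0 else (S.Paux 1 - S.α 0) / S.η) else S.Paux k

end AdaBBSC

end
/-!
All claims are one-step statements about the stepsize rule. Induction gives `α_k > 0` and
`θ_k ≥ 0`; then, in each of the three regimes of the rule, `P_{k+1} = α_{k+1} θ_{k+1}` is an
identity, and the bounds reduce to `α_{k+1}² ≤ (1 + η θ_k) α_k²` (first regime, from the cap
`√(1 + η θ_k) α_k`), to `r - r² ∈ [0, 1/4]` and `2r² - r ≤ 1` for `r = α_{k+1}/α_k ∈ (δ/2, 1)`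
(second regime), and to `λ_{k+1} < α_k` (third regime, since `δ < 2`). The convention for `P_0`
makes `P_1 ≤ α_0 + η P_0` hold with equality when `η > 0`.
-/

namespace AdaBBSC

variable {n : ℕ} (S : AdaBBSC n)

theorem α_pos_and_θ_nonneg (k : ℕ) : 0 < S.α k ∧ 0 ≤ S.θ k := by
  induction k with
  | zero => exact ⟨S.hα0, S.hθ0⟩
  | succ k ih =>
    obtain ⟨hα, hθ⟩ := ih
    have hlam := S.hlampos k
    have hδ1 := S.hδ1
    rcases le_or_gt (S.α k) (S.lam (k + 1)) with h1 | h1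
    · obtain ⟨hα', hθ'⟩ := S.hcase1 k h1
      have hsqrt : 0 < Real.sqrt (1 + S.η * S.θ k) :=
        Real.sqrt_pos.mpr (by nlinarith [mul_nonneg S.hη0 hθ])
      have hpos : 0 < S.α (k + 1) := hα' ▸ lt_min (mul_pos hsqrt hα) hlam
      exact ⟨hpos, hθ' ▸ by positivity⟩
    rcases lt_or_ge (S.δ * S.α k / 2) (S.lam (k + 1)) with h2 | h2
    · obtain ⟨hα', hθ'⟩ := S.hcase2 k h2 h1
      refine ⟨hα' ▸ hlam, ?_⟩
      rw [hθ', hα', sub_nonneg, le_div_iff₀ hα]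
      nlinarith
    · obtain ⟨hα', hθ'⟩ := S.hcase3 k h2
      have hpos : 0 < S.α (k + 1) := hα' ▸ by positivity
      exact ⟨hpos, hθ' ▸ by positivity⟩

theorem α_pos (k : ℕ) : 0 < S.α k := (S.α_pos_and_θ_nonneg k).1

theorem θ_nonneg (k : ℕ) : 0 ≤ S.θ k := (S.α_pos_and_θ_nonneg k).2

theorem lam_lt_α_of_le (k : ℕ) (h : S.lam (k + 1) ≤ S.δ * S.α k / 2) : S.lam (k + 1) < S.α k := by
  nlinarith [S.hδ2, S.α_pos k]

theorem M_succ_nonneg_and_two_mul_le_one (k : ℕ) : 0 ≤ S.M (k + 1) ∧ 2 * S.M (k + 1) ≤ 1 := by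
  have hα := S.α_pos k
  simp only [M, Nat.add_sub_cancel]
  split_ifs with h1 h2
  · norm_num
  · obtain ⟨hα', -⟩ := S.hcase2 k h2 (not_le.mp h1)
    have hr0 : 0 ≤ S.α (k + 1) / S.α k := by have := S.α_pos (k + 1); positivity
    have hr1 : S.α (k + 1) / S.α k ≤ 1 := (div_le_one hα).mpr (hα' ▸ (not_le.mp h1).le)
    rw [← div_pow]
    constructor <;> nlinarith
  · have hlt := S.lam_lt_α_of_le k (not_lt.mp h2)
    have hq0 : 0 ≤ S.lam (k + 1) / (2 * S.α k) := by have := S.hlampos k; positivity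
    have hq1 : S.lam (k + 1) / (2 * S.α k) ≤ 1 / 2 := by
      rw [div_le_iff₀ (by positivity)]; linarith
    constructor <;> linarith

theorem P_succ (k : ℕ) : S.P (k + 1) = S.Paux (k + 1) := if_neg k.succ_ne_zero

theorem P_succ_eq_α_mul_θ (k : ℕ) : S.P (k + 1) = S.α (k + 1) * S.θ (k + 1) := by
  have hα := (S.α_pos k).ne'
  rw [P_succ]
  simp only [Paux, Nat.add_sub_cancel]
  split_ifs with h1 h2
  · rw [(S.hcase1 k h1).2]; field_simp
  · rw [(S.hcase2 k h2 (not_le.mp h1)).2]; field_simp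
  · rw [(S.hcase3 k (not_lt.mp h2)).2]; field_simp

theorem P_succ_nonneg (k : ℕ) : 0 ≤ S.P (k + 1) := by
  rw [P_succ_eq_α_mul_θ]
  exact mul_nonneg (S.α_pos _).le (S.θ_nonneg _)

theorem Paux_succ_le (k : ℕ) : S.Paux (k + 1) ≤ S.α k + S.η * (S.α k * S.θ k) := by
  have hα := S.α_pos k
  have hα' := S.α_pos (k + 1)
  have hηθ : 0 ≤ S.η * S.θ k := mul_nonneg S.hη0 (S.θ_nonneg k)
  simp only [Paux, Nat.add_sub_cancel]
  rw [← mul_assoc, mul_comm S.η, mul_assoc, ← mul_one_add]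
  have hle_α : ∀ p, p ≤ S.α k → p ≤ S.α k * (1 + S.η * S.θ k) := fun p hp =>
    hp.trans (le_mul_of_one_le_right hα.le (by linarith))
  split_ifs with h1 h2
  · have hcap : S.α (k + 1) ≤ Real.sqrt (1 + S.η * S.θ k) * S.α k :=
      (S.hcase1 k h1).1 ▸ min_le_left _ _
    have hsq : S.α (k + 1) ^ 2 ≤ (1 + S.η * S.θ k) * S.α k ^ 2 := by
      calc S.α (k + 1) ^ 2 ≤ (Real.sqrt (1 + S.η * S.θ k) * S.α k) ^ 2 := by gcongr
        _ = (1 + S.η * S.θ k) * S.α k ^ 2 := by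
          rw [mul_pow, Real.sq_sqrt (by positivity)]
    rw [div_le_iff₀ hα]
    nlinarith
  · have hlt : S.α (k + 1) < S.α k := (S.hcase2 k h2 (not_le.mp h1)).1 ▸ not_le.mp h1
    refine hle_α _ ?_
    rw [sub_le_iff_le_add, div_le_iff₀ hα]
    nlinarith
  · have hlt := S.lam_lt_α_of_le k (not_lt.mp h2)
    have hsq : S.α (k + 1) ^ 2 = S.lam (k + 1) ^ 2 / 2 := by
      rw [(S.hcase3 k (not_lt.mp h2)).1, div_pow, Real.sq_sqrt zero_le_two]
    refine hle_α _ ?_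
    rw [div_le_iff₀ hα, hsq]
    nlinarith [S.hlampos k]

theorem P_succ_le (k : ℕ) : S.P (k + 1) ≤ S.α k + S.η * S.P k := by
  rcases k with _ | k
  · by_cases hη : S.η = 0
    · simpa [P, hη] using S.Paux_succ_le 0
    · simp [P, hη, mul_div_cancel₀]
  · rw [S.P_succ_eq_α_mul_θ k, P_succ]
    exact S.Paux_succ_le (k + 1)

end AdaBBSC

/-- Lemma 5.1: for the strongly-convex variant of AdaBB, `M_k ≥ 0`, `P_k ≥ 0` and
`P_k = α_k·θ_k` for all `k ≥ 1`; and `2·M_{k+1} ≤ 1` and `P_{k+1} ≤ α_k + η·P_k` for all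
`k ≥ 0`. -/
theorem adabbsc_MP_properties (n : ℕ) (S : AdaBBSC n) :
    (∀ k, 1 ≤ k → 0 ≤ S.M k ∧ 0 ≤ S.P k ∧ S.P k = S.α k * S.θ k) ∧
    (∀ k, 2 * S.M (k + 1) ≤ 1 ∧ S.P (k + 1) ≤ S.α k + S.η * S.P k) := by
  refine ⟨fun k hk => ?_, fun k => ⟨(S.M_succ_nonneg_and_two_mul_le_one k).2, S.P_succ_le k⟩⟩
  obtain ⟨k, rfl⟩ := Nat.exists_eq_add_of_le' hk
  exact ⟨(S.M_succ_nonneg_and_two_mul_le_one k).1, S.P_succ_nonneg k, S.P_succ_eq_α_mul_θ k⟩
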